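/- For PSD matrices K_X, K_Y ∈ ℝ^{M×M}, Tr[K_X K_Y] ≤ ℱ(K_X, K_Y)², where ℱ(K_X, K_Y) = Tr[(K_X^{1/2} K_Y K_X^{1/2})^{1/2}] is the fidelity. -/

import Mathlib

open Matrix

lemma real_conjTranspose_eq {m n : ℕ} (A : Matrix (Fin m) (Fin n) ℝ) : Aᴴ = Aᵀ := rfl

lemma psd_tmul {m n : ℕ} (A : Matrix (Fin m) (Fin n) ℝ) : (Aᵀ * A).PosSemidef := by
  have h := Matrix.posSemidef_conjTranspose_mul_self A
  rwa [real_conjTranspose_eq] at h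

lemma psd_gram {m n : ℕ} (A : Matrix (Fin m) (Fin n) ℝ) : (A * Aᵀ).PosSemidef := by
  have h := Matrix.posSemidef_self_mul_conjTranspose A
  rwa [real_conjTranspose_eq] at h

open scoped ComplexOrder in
/-- The positive semidefinite square root of a positive semidefinite matrix
(the definition of `Matrix.PosSemidef.sqrt` in Mathlib of December 2024, since removed). -/
noncomputable def Matrix.PosSemidef.sqrt {n 𝕜 : Type*} [Fintype n] [RCLike 𝕜] [DecidableEq n]
    {A : Matrix n n 𝕜} (hA : A.PosSemidef) : Matrix n n 𝕜 :=
  hA.1.eigenvectorUnitary.1 * diagonal ((↑) ∘ (√·) ∘ hA.1.eigenvalues) *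
  (star hA.1.eigenvectorUnitary : Matrix n n 𝕜)

open scoped ComplexOrder in
lemma Matrix.PosSemidef.posSemidef_sqrt {n 𝕜 : Type*} [Fintype n] [RCLike 𝕜] [DecidableEq n]
    {A : Matrix n n 𝕜} (hA : A.PosSemidef) : PosSemidef hA.sqrt := by
  have h := (posSemidef_diagonal_iff (d := ((↑) ∘ (√·) ∘ hA.1.eigenvalues : n → 𝕜)).mpr
    fun i => ?_).mul_mul_conjTranspose_same
    (hA.1.eigenvectorUnitary : Matrix n n 𝕜)
  · unfold Matrix.PosSemidef.sqrt
    rwa [star_eq_conjTranspose]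
  · exact RCLike.ofReal_nonneg.mpr (Real.sqrt_nonneg _)

lemma psd_sand {M : ℕ} {Kx Ky : Matrix (Fin M) (Fin M) ℝ} (hx : Kx.PosSemidef) (hy : Ky.PosSemidef) :
    (hx.sqrt * Ky * hx.sqrt).PosSemidef := by
  have h := hy.mul_mul_conjTranspose_same hx.sqrt
  rwa [hx.posSemidef_sqrt.isHermitian.eq] at h

/-- Nuclear norm: sum of singular values, i.e. `Tr[(AᵀA)^{1/2}]`. -/
noncomputable def nuclearNorm {m n : ℕ} (A : Matrix (Fin m) (Fin n) ℝ) : ℝ :=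
  (Matrix.PosSemidef.sqrt (psd_tmul A)).trace

/-- Frobenius norm. -/
noncomputable def frobNorm {m n : ℕ} (A : Matrix (Fin m) (Fin n) ℝ) : ℝ :=
  Real.sqrt (Matrix.trace (Aᵀ * A))

/-- Fidelity `Tr[(Kx^{1/2} Ky Kx^{1/2})^{1/2}]` between PSD matrices. -/
noncomputable def fidelity {M : ℕ} {Kx Ky : Matrix (Fin M) (Fin M) ℝ}
    (hx : Kx.PosSemidef) (hy : Ky.PosSemidef) : ℝ :=
  (Matrix.PosSemidef.sqrt (psd_sand hx hy)).trace

/-! With `T = (Kx^{1/2} Ky Kx^{1/2})^{1/2}`, cyclicity of the trace gives `Tr[Kx Ky] = Tr[T²]`.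
For a real PSD matrix `T`, `Tr[T²] = ∑ T_ij² ≤ ∑ T_ii T_jj = (Tr T)²`, the inequality being the
nonnegativity of the `2 × 2` principal minors. -/

open scoped ComplexOrder in
lemma Matrix.PosSemidef.sqrt_mul_self {n 𝕜 : Type*} [Fintype n] [RCLike 𝕜] [DecidableEq n]
    {A : Matrix n n 𝕜} (hA : A.PosSemidef) : hA.sqrt * hA.sqrt = A := by
  set U : Matrix n n 𝕜 := (hA.1.eigenvectorUnitary : Matrix n n 𝕜)
  set D : Matrix n n 𝕜 := diagonal ((↑) ∘ (√·) ∘ hA.1.eigenvalues)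
  have hUU : star U * U = 1 := Unitary.coe_star_mul_self hA.1.eigenvectorUnitary
  have hDD : D * D = diagonal ((↑) ∘ hA.1.eigenvalues) := by
    rw [diagonal_mul_diagonal]
    congr 1
    funext i
    simp only [Function.comp_apply]
    rw [← RCLike.ofReal_mul, Real.mul_self_sqrt (hA.eigenvalues_nonneg i)]
  conv_rhs => rw [hA.1.spectral_theorem, Unitary.conjStarAlgAut_apply]
  calc hA.sqrt * hA.sqrt = U * (D * (star U * U) * D) * star U := by
        simp only [Matrix.PosSemidef.sqrt, U, D, mul_assoc]
    _ = _ := by rw [hUU, mul_one, hDD]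

open scoped ComplexOrder in
lemma Matrix.PosSemidef.trace_mul_eq_trace_sqrt_mul_mul_sqrt {n 𝕜 : Type*} [Fintype n] [RCLike 𝕜]
    [DecidableEq n] {A : Matrix n n 𝕜} (hA : A.PosSemidef) (B : Matrix n n 𝕜) :
    (A * B).trace = (hA.sqrt * B * hA.sqrt).trace := by
  rw [trace_mul_cycle, hA.sqrt_mul_self]

lemma Matrix.PosSemidef.sq_apply_le {n : Type*} [Fintype n] {A : Matrix n n ℝ}
    (hA : A.PosSemidef) (i j : n) : A i j ^ 2 ≤ A i i * A j j := by
  have hminor := (hA.submatrix ![i, j]).det_nonneg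
  have hsymm : A j i = A i j := (isHermitian_iff_isSymm.mp hA.1).apply i j
  simp only [det_fin_two, submatrix_apply, cons_val_zero, cons_val_one, hsymm,
    ← sq] at hminor
  linarith

lemma Matrix.PosSemidef.trace_mul_self_le_trace_sq {n : Type*} [Fintype n] {A : Matrix n n ℝ}
    (hA : A.PosSemidef) : (A * A).trace ≤ A.trace ^ 2 := by
  have hsymm := (isHermitian_iff_isSymm.mp hA.1).apply
  calc (A * A).trace = ∑ i, ∑ j, A i j * A j i := by simp only [trace, diag, mul_apply]
    _ = ∑ i, ∑ j, A i j ^ 2 :=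
        Finset.sum_congr rfl fun i _ => Finset.sum_congr rfl fun j _ => by rw [sq, hsymm i j]
    _ ≤ ∑ i, ∑ j, A i i * A j j := by gcongr with i _ j _; exact hA.sq_apply_le i j
    _ = A.trace ^ 2 := by rw [trace, sq, Finset.sum_mul_sum]; rfl

theorem trace_mul_le_fidelity_sq (M : ℕ) (Kx Ky : Matrix (Fin M) (Fin M) ℝ)
    (hx : Kx.PosSemidef) (hy : Ky.PosSemidef) :
    Matrix.trace (Kx * Ky) ≤ (fidelity hx hy) ^ 2 :=
  calc (Kx * Ky).trace = (hx.sqrt * Ky * hx.sqrt).trace :=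
        hx.trace_mul_eq_trace_sqrt_mul_mul_sqrt Ky
    _ = ((psd_sand hx hy).sqrt * (psd_sand hx hy).sqrt).trace := by
        rw [(psd_sand hx hy).sqrt_mul_self]
    _ ≤ fidelity hx hy ^ 2 := (psd_sand hx hy).posSemidef_sqrt.trace_mul_self_le_trace_sq
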